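/- Let n be a positive integer and let b, d be real numbers with b < 1 - n and d > 0. Then the polynomial ₂F₁(-n, b; d; z) has exactly n zeros, all of which are real and simple and lie in the open interval (-∞, 0). -/

import Mathlib

/-!
The coefficients of `p = ₂F₁(-n, b; d; ·)` are positive, so `p` has degree `n` and `p(0) = 1`.
Its derivative is a positive multiple of `q = ₂F₁(-(n-1), b+1; d+1; ·)`, which satisfies the same
hypotheses, so by induction `q` has `n - 1` simple negative roots. At such a root `y` we have
`p'(y) = 0`, and the hypergeometric equation `z(1-z)p'' + (d - (b-n+1)z)p' + nbp = 0` reduces to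
`y(1-y)p''(y) = -nb p(y)`; as `y(1-y) < 0 < -nb`, the sign of `p(y)` is opposite to that of
`q'(y)`. The signs of `q'` alternate along the roots of `q`, so, together with `p(0) > 0` and the
sign of `p` at `-∞`, `p` changes sign `n` times on `(-∞, 0)`.
-/

/-- The Pochhammer symbol `(x)_k = x (x+1) ⋯ (x+k-1)` for a real number `x`. -/
noncomputable def poch (x : ℝ) (k : ℕ) : ℝ := ∏ i ∈ Finset.range k, (x + i)

/-- The terminating Gauss hypergeometric polynomial `₂F₁(-n, b; d; z)`
    as a real polynomial in `z`. -/
noncomputable def hypPoly (n : ℕ) (b d : ℝ) : Polynomial ℝ :=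
  ∑ k ∈ Finset.range (n + 1),
    Polynomial.C ((poch (-(n : ℝ)) k * poch b k) / (poch d k * (Nat.factorial k))) *
      Polynomial.X ^ k

open Polynomial Finset Filter

lemma neg_one_pow_succ_mul_pos_iff {a b : ℝ} {k : ℕ} (hb : 0 < (-1) ^ k * b) :
    0 < (-1) ^ (k + 1) * a ↔ a * b < 0 := by
  rcases neg_one_pow_eq_or ℝ k with h | h <;> rw [h] at hb <;> rw [pow_succ, h] <;>
    constructor <;> intro <;> nlinarith

lemma neg_one_pow_card_filter_lt_mul_prod_sub_pos {S : Finset ℝ} {t : ℝ} (ht : t ∉ S) :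
    0 < (-1 : ℝ) ^ #{x ∈ S | t < x} * ∏ x ∈ S, (t - x) := by
  rw [← prod_const, prod_filter, ← prod_mul_distrib]
  refine prod_pos fun x hx => ?_
  split_ifs with htx
  · linarith
  · simpa using lt_of_le_of_ne (not_lt.mp htx) fun h => ht (h ▸ hx)

namespace Polynomial

lemma coeff_X_mul_derivative {R : Type*} [CommSemiring R] (p : R[X]) (k : ℕ) :
    (X * derivative p).coeff k = k * p.coeff k := by
  cases k <;> simp [coeff_derivative, mul_comm]

section Roots

variable {R : Type*} [CommRing R] [IsDomain R] {p : R[X]} {S : Finset R}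

lemma eq_C_leadingCoeff_mul_prod_X_sub_C (hroots : p.roots = S.val) (hcard : #S = p.natDegree) :
    p = C p.leadingCoeff * ∏ x ∈ S, (X - C x) := by
  have hcard' : Multiset.card p.roots = p.natDegree := by rw [hroots]; exact hcard
  conv_lhs => rw [← C_leadingCoeff_mul_prod_multiset_X_sub_C hcard', hroots]
  rfl

lemma eval_derivative_eq_leadingCoeff_mul_prod_erase [DecidableEq R] (hroots : p.roots = S.val)
    (hcard : #S = p.natDegree) {y : R} (hy : y ∈ S) :
    (derivative p).eval y = p.leadingCoeff * ∏ x ∈ S.erase y, (y - x) := by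
  conv_lhs => rw [eq_C_leadingCoeff_mul_prod_X_sub_C hroots hcard, ← mul_prod_erase S _ hy]
  simp [eval_prod]

end Roots

variable {p : ℝ[X]}

lemma neg_one_pow_mul_eval_derivative_pos {S : Finset ℝ} (hroots : p.roots = S.val)
    (hcard : #S = p.natDegree) (hlc : 0 < p.leadingCoeff) {y : ℝ} (hy : y ∈ S) :
    0 < (-1 : ℝ) ^ #{x ∈ S | y < x} * (derivative p).eval y := by
  have hfilter : {x ∈ S.erase y | y < x} = {x ∈ S | y < x} := by
    rw [filter_erase, erase_eq_of_notMem (by simp)]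
  rw [eval_derivative_eq_leadingCoeff_mul_prod_erase hroots hcard hy, mul_left_comm, ← hfilter]
  exact mul_pos hlc (neg_one_pow_card_filter_lt_mul_prod_sub_pos (notMem_erase y S))

lemma exists_isRoot_mem_Ioo_of_eval_mul_eval_neg {a b : ℝ} (hab : a ≤ b)
    (h : p.eval a * p.eval b < 0) : ∃ r ∈ Set.Ioo a b, p.IsRoot r := by
  have hcont : ContinuousOn (fun x => p.eval x) (Set.Icc a b) := p.continuous.continuousOn
  rcases mul_neg_iff.mp h with ⟨ha, hb⟩ | ⟨ha, hb⟩
  · exact intermediate_value_Ioo' hab hcont ⟨hb, ha⟩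
  · exact intermediate_value_Ioo hab hcont ⟨ha, hb⟩

lemma exists_roots_between_of_alternating_signs (E : Finset ℝ)
    (hE : ∀ t ∈ E, 0 < (-1 : ℝ) ^ #{s ∈ E | t < s} * p.eval t) :
    ∃ S : Finset ℝ, #S = #E - 1 ∧ ∀ x ∈ S, p.IsRoot x ∧ (∃ s ∈ E, s < x) ∧ ∃ t ∈ E, x < t := by
  induction E using Finset.induction_on_min with
  | empty => exact ⟨∅, rfl, by simp⟩
  | insert a E ha ih =>
    have hfilter : ∀ t ∈ E, {s ∈ insert a E | t < s} = {s ∈ E | t < s} := fun t ht => by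
      rw [filter_insert, if_neg (ha t ht).not_gt]
    obtain ⟨S, hS, hSE⟩ := ih fun t ht => hfilter t ht ▸ hE t (mem_insert_of_mem ht)
    rcases E.eq_empty_or_nonempty with rfl | hne
    · exact ⟨∅, by simp, by simp⟩
    set a' := E.min' hne
    have ha'E : a' ∈ E := min'_mem E hne
    have hsign_a : 0 < (-1 : ℝ) ^ #E * p.eval a := by
      have := hE a (mem_insert_self a E)
      rwa [filter_insert, if_neg (lt_irrefl a), filter_true_of_mem ha] at this
    have hsign_a' : 0 < (-1 : ℝ) ^ (#E - 1) * p.eval a' := by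
      have := hfilter a' ha'E ▸ hE a' (mem_insert_of_mem ha'E)
      have herase : {s ∈ E | a' < s} = E.erase a' := by
        ext s
        simp only [mem_filter, mem_erase]
        exact ⟨fun h => ⟨h.2.ne', h.1⟩, fun h => ⟨h.2, lt_of_le_of_ne (min'_le E s h.2) h.1.symm⟩⟩
      rwa [herase, card_erase_of_mem ha'E] at this
    rw [← Nat.sub_add_cancel (card_pos.mpr hne)] at hsign_a
    obtain ⟨r, ⟨har, hra'⟩, hr⟩ := exists_isRoot_mem_Ioo_of_eval_mul_eval_neg (ha a' ha'E).le
      ((neg_one_pow_succ_mul_pos_iff hsign_a').mp hsign_a)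
    have hrS : r ∉ S := fun hrS => by
      obtain ⟨-, ⟨s, hs, hsr⟩, -⟩ := hSE r hrS
      exact (hra'.trans_le (min'_le E s hs)).not_gt hsr
    refine ⟨insert r S, ?_, ?_⟩
    · rw [card_insert_of_notMem hrS, card_insert_of_notMem fun h => (ha a h).false, hS]
      have := card_pos.mpr hne
      omega
    · intro x hx
      rcases mem_insert.mp hx with rfl | hx
      · exact ⟨hr, ⟨a, mem_insert_self a E, har⟩, a', mem_insert_of_mem ha'E, hra'⟩
      · obtain ⟨hroot, ⟨s, hs, hsx⟩, t, ht, hxt⟩ := hSE x hx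
        exact ⟨hroot, ⟨s, mem_insert_of_mem hs, hsx⟩, t, mem_insert_of_mem ht, hxt⟩

lemma exists_lt_neg_one_pow_natDegree_mul_eval_pos (hlc : 0 < p.leadingCoeff) (c : ℝ) :
    ∃ t < c, 0 < (-1 : ℝ) ^ p.natDegree * p.eval t := by
  have hequiv := (Asymptotics.IsEquivalent.refl (u := fun _ : ℝ => (-1 : ℝ) ^ p.natDegree)).mul
    p.isEquivalent_atBot_lead
  have hpos : ∀ᶠ t in atBot, 0 < (-1 : ℝ) ^ p.natDegree * (p.leadingCoeff * t ^ p.natDegree) :=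
    (eventually_lt_atBot 0).mono fun t ht => by
      rw [mul_left_comm, ← mul_pow]
      exact mul_pos hlc (pow_pos (by linarith) _)
  obtain ⟨t, ht, htc⟩ := ((hequiv.eventually_pos hpos).and (eventually_lt_atBot c)).exists
  exact ⟨t, htc, ht⟩

lemma exists_neg_simple_roots_of_alternating_signs {Y : Finset ℝ} (hlc : 0 < p.leadingCoeff)
    (hdeg : p.natDegree = #Y + 1) (hY : ∀ y ∈ Y, y < 0) (h0 : 0 < p.eval 0)
    (hsign : ∀ y ∈ Y, 0 < (-1 : ℝ) ^ (#{x ∈ Y | y < x} + 1) * p.eval y) :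
    ∃ S : Finset ℝ, #S = p.natDegree ∧ (∀ x ∈ S, x < 0) ∧ p.roots = S.val := by
  obtain ⟨T, hT, hTsign⟩ :=
    exists_lt_neg_one_pow_natDegree_mul_eval_pos hlc ((insert 0 Y).min' (insert_nonempty 0 Y))
  have hTlt : ∀ s ∈ insert 0 Y, T < s := fun s hs => hT.trans_le (min'_le _ s hs)
  have h0Y : (0 : ℝ) ∉ Y := fun h => (hY 0 h).false
  have hTY : T ∉ insert 0 Y := fun h => (hTlt T h).false
  set E := insert T (insert 0 Y)
  have hEnonpos : ∀ s ∈ E, s ≤ 0 := by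
    simp only [E, mem_insert, forall_eq_or_imp]
    exact ⟨(hTlt 0 (mem_insert_self 0 Y)).le, le_rfl, fun y hy => (hY y hy).le⟩
  have hE : ∀ t ∈ E, 0 < (-1 : ℝ) ^ #{s ∈ E | t < s} * p.eval t := by
    simp only [E, mem_insert, forall_eq_or_imp]
    refine ⟨?_, ?_, fun y hy => ?_⟩
    · rwa [filter_insert, if_neg (lt_irrefl T), filter_true_of_mem hTlt,
        card_insert_of_notMem h0Y, ← hdeg]
    · rwa [filter_false_of_mem fun s hs => (hEnonpos s hs).not_gt, card_empty, pow_zero, one_mul]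
    · rw [filter_insert, if_neg (hTlt y (mem_insert_of_mem hy)).not_gt, filter_insert,
        if_pos (hY y hy), card_insert_of_notMem fun h => h0Y (mem_filter.mp h).1]
      exact hsign y hy
  obtain ⟨S, hS, hSE⟩ := exists_roots_between_of_alternating_signs E hE
  have hcard : #S = p.natDegree := by
    rw [hS, card_insert_of_notMem hTY, card_insert_of_notMem h0Y, hdeg]
    rfl
  refine ⟨S, hcard, fun x hx => ?_, ?_⟩
  · obtain ⟨-, -, t, ht, hxt⟩ := hSE x hx
    exact hxt.trans_le (hEnonpos t ht)
  · exact roots_eq_of_natDegree_le_card_of_ne_zero (fun x hx => (hSE x hx).1) hcard.ge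
      (leadingCoeff_ne_zero.mp hlc.ne')

end Polynomial

lemma poch_succ (x : ℝ) (k : ℕ) : poch x (k + 1) = poch x k * (x + k) :=
  prod_range_succ _ _

lemma poch_succ' (x : ℝ) (k : ℕ) : poch x (k + 1) = x * poch (x + 1) k := by
  simp only [poch, prod_range_succ', Nat.cast_add, Nat.cast_one, CharP.cast_eq_zero, add_zero]
  rw [mul_comm]
  congr! 2 with i
  ring

lemma poch_pos {x : ℝ} (hx : 0 < x) (k : ℕ) : 0 < poch x k :=
  prod_pos fun i _ => by positivity

lemma poch_neg_natCast_eq_zero {n k : ℕ} (h : n < k) : poch (-n) k = 0 :=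
  prod_eq_zero (mem_range.mpr h) (neg_add_cancel _)

lemma poch_mul_poch_pos {x y : ℝ} {k : ℕ} (hx : x + k < 1) (hy : y + k < 1) :
    0 < poch x k * poch y k := by
  rw [poch, poch, ← prod_mul_distrib]
  refine prod_pos fun i hi => mul_pos_of_neg_of_neg ?_ ?_
  all_goals
    have : (i : ℝ) + 1 ≤ k := by exact_mod_cast mem_range.mp hi
    linarith

noncomputable def hypCoeff (n : ℕ) (b d : ℝ) (k : ℕ) : ℝ :=
  poch (-(n : ℝ)) k * poch b k / (poch d k * (Nat.factorial k))

lemma coeff_hypPoly (n : ℕ) (b d : ℝ) (k : ℕ) : (hypPoly n b d).coeff k = hypCoeff n b d k := by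
  simp only [hypPoly, finsetSum_coeff, coeff_C_mul_X_pow, sum_ite_eq, mem_range]
  split_ifs with hk
  · rfl
  · simp [hypCoeff, poch_neg_natCast_eq_zero (by omega : n < k)]

lemma hypCoeff_pos {n : ℕ} {b d : ℝ} (hb : b < 1 - n) (hd : 0 < d) {k : ℕ} (hk : k ≤ n) :
    0 < hypCoeff n b d k := by
  have hk' : (k : ℝ) ≤ n := by exact_mod_cast hk
  have hnum := poch_mul_poch_pos (x := -n) (y := b) (k := k) (by linarith) (by linarith)
  have hden := poch_pos hd k
  unfold hypCoeff
  positivity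

lemma hypCoeff_succ (n : ℕ) (b : ℝ) {d : ℝ} (hd : 0 < d) (k : ℕ) :
    (k + 1) * (d + k) * hypCoeff n b d (k + 1) = (k - n) * (b + k) * hypCoeff n b d k := by
  have := poch_pos hd k
  simp only [hypCoeff, poch_succ, Nat.factorial_succ, Nat.cast_mul, Nat.cast_succ]
  field_simp
  ring

lemma natDegree_hypPoly {n : ℕ} {b d : ℝ} (hb : b < 1 - n) (hd : 0 < d) :
    (hypPoly n b d).natDegree = n := by
  refine le_antisymm (natDegree_le_iff_coeff_eq_zero.mpr fun k hk => ?_)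
    (le_natDegree_of_ne_zero ?_)
  · rw [coeff_hypPoly, hypCoeff, poch_neg_natCast_eq_zero (by exact_mod_cast hk), zero_mul,
      zero_div]
  · rw [coeff_hypPoly]
    exact (hypCoeff_pos hb hd le_rfl).ne'

lemma leadingCoeff_hypPoly_pos {n : ℕ} {b d : ℝ} (hb : b < 1 - n) (hd : 0 < d) :
    0 < (hypPoly n b d).leadingCoeff := by
  rw [leadingCoeff, natDegree_hypPoly hb hd, coeff_hypPoly]
  exact hypCoeff_pos hb hd le_rfl

lemma eval_zero_hypPoly (n : ℕ) (b d : ℝ) : (hypPoly n b d).eval 0 = 1 := by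
  simp [← coeff_zero_eq_eval_zero, coeff_hypPoly, hypCoeff, poch]

lemma derivative_hypPoly (n : ℕ) (b : ℝ) {d : ℝ} (hd : 0 < d) :
    derivative (hypPoly (n + 1) b d) = C ((n + 1) * -b / d) * hypPoly n (b + 1) (d + 1) := by
  ext k
  have := poch_pos (by linarith : 0 < d + 1) k
  rw [coeff_derivative, coeff_C_mul, coeff_hypPoly, coeff_hypPoly]
  simp only [hypCoeff, poch_succ', Nat.factorial_succ, Nat.cast_mul, Nat.cast_succ, neg_add,
    neg_add_cancel_right]
  field_simp
  ring

lemma hypPoly_ode (n : ℕ) (b : ℝ) {d : ℝ} (hd : 0 < d) :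
    X * (1 - X) * derivative (derivative (hypPoly n b d))
      + (C d - C (b - n + 1) * X) * derivative (hypPoly n b d)
      + C (n * b) * hypPoly n b d = 0 := by
  set P := hypPoly n b d
  set θP := X * derivative P
  -- With `θ = X d/dX` the equation reads `d/dX (θ + d - 1) P = (θ + b)(θ - n) P`, and the
  -- coefficients of `z^k` on both sides are the two sides of `hypCoeff_succ`.
  have euler : X * (1 - X) * derivative (derivative P) + (C d - C (b - n + 1) * X) * derivative P
      + C (n * b) * P
      = derivative (θP + C (d - 1) * P) - (X * derivative θP + C (b - n) * θP - C (n * b) * P) := by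
    simp only [θP, derivative_mul, derivative_X, derivative_C, derivative_one, map_sub, map_add,
      map_one, map_mul]
    ring
  ext k
  rw [euler]
  simp only [coeff_sub, coeff_add, coeff_derivative, coeff_C_mul, coeff_X_mul_derivative,
    θP, P, coeff_hypPoly, coeff_zero]
  push_cast
  linear_combination hypCoeff_succ n b hd k

lemma eval_hypPoly_mul_eval_derivative_neg {m : ℕ} {b d : ℝ} (hb : b < 0) (hd : 0 < d) {y : ℝ}
    (hy : y < 0) (hroot : (hypPoly m (b + 1) (d + 1)).IsRoot y)
    (hsimple : (derivative (hypPoly m (b + 1) (d + 1))).eval y ≠ 0) :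
    (hypPoly (m + 1) b d).eval y * (derivative (hypPoly m (b + 1) (d + 1))).eval y < 0 := by
  have hmb : 0 < (m + 1) * -b := mul_pos (by positivity) (neg_pos.mpr hb)
  have hode := congrArg (eval y) (hypPoly_ode (m + 1) b hd)
  simp only [derivative_hypPoly m b hd, derivative_C_mul, eval_add, eval_mul, eval_sub, eval_C,
    eval_X, eval_one, eval_zero, hroot.eq_zero] at hode
  push_cast at hode
  have key : ((m + 1) * -b) * ((hypPoly (m + 1) b d).eval y
        * (derivative (hypPoly m (b + 1) (d + 1))).eval y)
      = y * (1 - y) * ((m + 1) * -b / d)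
        * (derivative (hypPoly m (b + 1) (d + 1))).eval y ^ 2 := by
    linear_combination (-(derivative (hypPoly m (b + 1) (d + 1))).eval y) * hode
  refine neg_of_mul_neg_right (key ▸ ?_) hmb.le
  exact mul_neg_of_neg_of_pos
    (mul_neg_of_neg_of_pos (mul_neg_of_neg_of_pos hy (by linarith)) (div_pos hmb hd))
    (sq_pos_of_ne_zero hsimple)

lemma exists_neg_simple_roots_hypPoly (n : ℕ) {b d : ℝ} (hb : b < 1 - n) (hd : 0 < d) :
    ∃ S : Finset ℝ, #S = n ∧ (∀ x ∈ S, x < 0) ∧ (hypPoly n b d).roots = S.val := by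
  induction n generalizing b d with
  | zero => exact ⟨∅, rfl, by simp, by simp [hypPoly, poch]⟩
  | succ m ih =>
    have hb' : b + 1 < 1 - m := by push_cast at hb; linarith
    have hd' : 0 < d + 1 := by linarith
    obtain ⟨Y, hY, hYneg, hroots⟩ := ih hb' hd'
    have hcard : #Y = (hypPoly m (b + 1) (d + 1)).natDegree := by
      rw [natDegree_hypPoly hb' hd', hY]
    have hlc := leadingCoeff_hypPoly_pos hb' hd'
    have hsign : ∀ y ∈ Y, 0 < (-1 : ℝ) ^ (#{x ∈ Y | y < x} + 1) * (hypPoly (m + 1) b d).eval y := by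
      intro y hy
      have hq' := neg_one_pow_mul_eval_derivative_pos hroots hcard hlc hy
      have hroot : (hypPoly m (b + 1) (d + 1)).IsRoot y := by
        rw [← mem_roots (leadingCoeff_ne_zero.mp hlc.ne'), hroots]
        exact hy
      exact (neg_one_pow_succ_mul_pos_iff hq').mpr <| eval_hypPoly_mul_eval_derivative_neg
        (by linarith) hd (hYneg y hy) hroot (right_ne_zero_of_mul hq'.ne')
    obtain ⟨S, hS, hSneg, hSroots⟩ := exists_neg_simple_roots_of_alternating_signs
      (leadingCoeff_hypPoly_pos hb hd) (by rw [natDegree_hypPoly hb hd, hY]) hYneg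
      (by rw [eval_zero_hypPoly]; exact one_pos) hsign
    exact ⟨S, hS.trans (natDegree_hypPoly hb hd), hSneg, hSroots⟩

theorem hyp_zeros_in_Iio_zero_general (n : ℕ) (b d : ℝ)
    (hb : b < 1 - n) (hd : 0 < d) :
    ∃ S : Finset ℝ, S.card = n ∧ (∀ x ∈ S, x ∈ Set.Iio (0 : ℝ)) ∧
      ((hypPoly n b d).map (algebraMap ℝ ℂ)).roots = S.val.map (fun x => (x : ℂ)) := by
  obtain ⟨S, hS, hneg, hroots⟩ := exists_neg_simple_roots_hypPoly n hb hd
  have hsplits : (hypPoly n b d).Splits := by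
    rw [splits_iff_card_roots, hroots, natDegree_hypPoly hb hd]
    exact hS
  exact ⟨S, hS, hneg, by rw [hsplits.roots_map, hroots]; simp⟩

/-- For `b < 1 - n` and `d > 0`, the polynomial `₂F₁(-n, b; d; z)` has exactly `n`
zeros, all real, simple, and lying in `(-∞, 0)`: viewed over `ℂ`, its multiset of roots
is exactly the image of a set of `n` distinct reals in `(-∞, 0)`. -/
theorem hyp_zeros_in_Iio_zero (n : ℕ) (hn : 0 < n) (b d : ℝ)
    (hb : b < 1 - n) (hd : 0 < d) :
    ∃ S : Finset ℝ, S.card = n ∧ (∀ x ∈ S, x ∈ Set.Iio (0 : ℝ)) ∧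
      ((hypPoly n b d).map (algebraMap ℝ ℂ)).roots = S.val.map (fun x => (x : ℂ)) :=
  hyp_zeros_in_Iio_zero_general n b d hb hd
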